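/- In the classical SK model, for every function f on Σ_N with |f| ≤ 1 and every integer p ≥ 1, E[ |⟨f⟩ − ⟨f⟩_0|^{2p} ] ≤ K(p,β) k² / N, where ⟨·⟩_0 is the Gibbs measure of the interpolating Hamiltonian at t = 0 and K(p,β) depends only on p and β. -/

import Mathlib

/-!
At `t = 0` the couplings among the first `k` spins disappear, so, conditionally on the other
couplings, `⟨·⟩_1` is the tilt of `⟨·⟩_0` by the Gaussian field
`W = Σ_{j<j'≤k} g_{jj'} (β/√N) x_j x_{j'}`: at most `k²` Gaussians with coefficients of size
`β/√N`. Shifting `W` by its `⟨·⟩_0`-mean does not change the tilt, and once it is centred Jensen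
gives `⟨e^W⟩_0 ≥ 1`, so `(⟨f⟩_1 - ⟨f⟩_0)² ≤ 4 ⟨(e^W - 1)²⟩_0`. The Gaussian moment generating
function bounds the disorder average of the right side by `8 T e^{2T}` with `T = 4β²k²/N`.
Finally `|⟨f⟩_1 - ⟨f⟩_0| ≤ 2` reduces the `2p`-th moment to the second, and for `k² > N` the
bound is trivial.
-/

open MeasureTheory ProbabilityTheory Real

noncomputable section

/-- Ordered pairs `i < j` of sites, indexing the SK disorder `(g_{ij})_{i<j}`. -/
abbrev SKPairs (N : ℕ) := {q : Fin N × Fin N // q.1 < q.2}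

/-- The spin configuration in `Σ_N = {-1,1}^N` associated with a Boolean vector. -/
def spin {N : ℕ} (b : Fin N → Bool) : Fin N → ℝ := fun i => if b i then 1 else -1

/-- Minus the interpolating SK Hamiltonian `−H_{N,t}`: the interactions among the first
`k` spins carry a factor `√t`, and at `t = 1` this is the classical SK Hamiltonian
`(β/√N) Σ_{i<j} g_{ij} x_i x_j + h Σ_i x_i`. -/
def negHSK (N k : ℕ) (β h t : ℝ) (g : SKPairs N → ℝ) (x : Fin N → ℝ) : ℝ :=
  (β / Real.sqrt N) *
    ∑ pq : SKPairs N,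
      (if (pq.1.2 : ℕ) < k then Real.sqrt t else 1) * g pq * x pq.1.1 * x pq.1.2
  + h * ∑ i, x i

/-- Gibbs expectation `⟨f⟩_t` of a function `f` on `Σ_N` for the Hamiltonian `−H_{N,t}`. -/
def gibbsSK (N k : ℕ) (β h t : ℝ) (g : SKPairs N → ℝ) (f : (Fin N → ℝ) → ℝ) : ℝ :=
  (∑ b : Fin N → Bool, f (spin b) * Real.exp (negHSK N k β h t g (spin b))) /
    ∑ b : Fin N → Bool, Real.exp (negHSK N k β h t g (spin b))

section GibbsAverage

variable {S : Type*} [Fintype S] (H : S → ℝ)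

def gibbsWeight (s : S) : ℝ := exp (H s) / ∑ t, exp (H t)

def gibbsAvg (f : S → ℝ) : ℝ := ∑ s, gibbsWeight H s * f s

lemma gibbsWeight_pos (s : S) : 0 < gibbsWeight H s :=
  div_pos (exp_pos _) (Finset.sum_pos (fun _ _ => exp_pos _) ⟨s, Finset.mem_univ s⟩)

lemma gibbsAvg_eq_div (f : S → ℝ) :
    gibbsAvg H f = (∑ s, f s * exp (H s)) / ∑ s, exp (H s) := by
  simp only [gibbsAvg, gibbsWeight, Finset.sum_div]
  exact Finset.sum_congr rfl fun s _ => by ring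

lemma gibbsAvg_mono {f f' : S → ℝ} (h : ∀ s, f s ≤ f' s) : gibbsAvg H f ≤ gibbsAvg H f' :=
  Finset.sum_le_sum fun s _ => mul_le_mul_of_nonneg_left (h s) (gibbsWeight_pos H s).le

lemma gibbsAvg_mul_const (F : S → ℝ) (x : ℝ) :
    gibbsAvg H (fun s => F s * x) = gibbsAvg H F * x := by
  simp only [gibbsAvg, Finset.sum_mul, mul_assoc]

lemma gibbsAvg_const_mul (x : ℝ) (F : S → ℝ) :
    gibbsAvg H (fun s => x * F s) = x * gibbsAvg H F := by
  simp only [gibbsAvg, Finset.mul_sum, mul_left_comm]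

lemma gibbsAvg_sub (F G : S → ℝ) :
    gibbsAvg H (fun s => F s - G s) = gibbsAvg H F - gibbsAvg H G := by
  simp only [gibbsAvg, mul_sub, Finset.sum_sub_distrib]

lemma gibbsAvg_sum {ι : Type*} [Fintype ι] (F : ι → S → ℝ) :
    gibbsAvg H (fun s => ∑ a, F a s) = ∑ a, gibbsAvg H (F a) := by
  simp only [gibbsAvg, Finset.mul_sum]
  exact Finset.sum_comm

lemma gibbsAvg_add_const (c : ℝ) (f : S → ℝ) :
    gibbsAvg (fun s => H s + c) f = gibbsAvg H f := by
  simp only [gibbsAvg_eq_div, exp_add, ← mul_assoc, ← Finset.sum_mul]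
  exact mul_div_mul_right _ _ (exp_pos c).ne'

lemma integrable_gibbsAvg {X : Type*} [MeasurableSpace X] {μ : Measure X} {F : S → X → ℝ}
    (hF : ∀ s, Integrable (F s) μ) : Integrable (fun x => gibbsAvg H (fun s => F s x)) μ :=
  integrable_finsetSum _ fun s _ => (hF s).const_mul _

lemma integral_gibbsAvg {X : Type*} [MeasurableSpace X] {μ : Measure X} {F : S → X → ℝ}
    (hF : ∀ s, Integrable (F s) μ) :
    ∫ x, gibbsAvg H (fun s => F s x) ∂μ = gibbsAvg H (fun s => ∫ x, F s x ∂μ) := by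
  simp only [gibbsAvg]
  rw [integral_finsetSum _ fun s _ => (hF s).const_mul _]
  simp only [integral_const_mul]

variable [Nonempty S]

lemma sum_exp_pos : 0 < ∑ s, exp (H s) :=
  Finset.sum_pos (fun _ _ => exp_pos _) Finset.univ_nonempty

lemma sum_gibbsWeight : ∑ s, gibbsWeight H s = 1 := by
  simp only [gibbsWeight, ← Finset.sum_div, div_self (sum_exp_pos H).ne']

lemma gibbsAvg_const (c : ℝ) : gibbsAvg H (fun _ => c) = c := by
  rw [gibbsAvg, ← Finset.sum_mul, sum_gibbsWeight, one_mul]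

lemma gibbsAvg_sub_const (F : S → ℝ) (c : ℝ) :
    gibbsAvg H (fun s => F s - c) = gibbsAvg H F - c := by
  rw [gibbsAvg_sub, gibbsAvg_const]

lemma abs_gibbsAvg_le {f : S → ℝ} {M : ℝ} (hf : ∀ s, |f s| ≤ M) : |gibbsAvg H f| ≤ M := by
  rw [abs_le]
  constructor
  · simpa [gibbsAvg_const] using gibbsAvg_mono H fun s => (abs_le.mp (hf s)).1
  · simpa [gibbsAvg_const] using gibbsAvg_mono H fun s => (abs_le.mp (hf s)).2

lemma gibbsAvg_tilt (W f : S → ℝ) :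
    gibbsAvg (fun s => H s + W s) f
      = gibbsAvg H (fun s => f s * exp (W s)) / gibbsAvg H (fun s => exp (W s)) := by
  simp only [gibbsAvg_eq_div, exp_add]
  rw [div_div_div_cancel_right₀ (sum_exp_pos H).ne']
  congr 1 <;> exact Finset.sum_congr rfl fun s _ => by ring

lemma ConvexOn.map_gibbsAvg_le {φ : ℝ → ℝ} (hφ : ConvexOn ℝ Set.univ φ) (f : S → ℝ) :
    φ (gibbsAvg H f) ≤ gibbsAvg H (fun s => φ (f s)) := by
  simpa [gibbsAvg] using hφ.map_sum_le (t := Finset.univ) (fun s _ => (gibbsWeight_pos H s).le)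
    (sum_gibbsWeight H) (fun s _ => Set.mem_univ (f s))

lemma sq_gibbsAvg_tilt_sub_le {f W : S → ℝ} (hf : ∀ s, |f s| ≤ 1) (hW : gibbsAvg H W = 0) :
    (gibbsAvg (fun s => H s + W s) f - gibbsAvg H f) ^ 2
      ≤ 4 * gibbsAvg H (fun s => (exp (W s) - 1) ^ 2) := by
  set c := gibbsAvg H f
  set A := gibbsAvg H (fun s => exp (W s))
  have hA : 1 ≤ A := by simpa [hW] using convexOn_exp.map_gibbsAvg_le H W
  have hnum : gibbsAvg H (fun s => f s * exp (W s)) - c * A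
      = gibbsAvg H (fun s => (f s - c) * (exp (W s) - 1)) := by
    have hexpand : (fun s => (f s - c) * (exp (W s) - 1))
        = fun s => (f s * exp (W s) - c * exp (W s)) - (f s - c) := by
      funext s; ring
    rw [hexpand, gibbsAvg_sub, gibbsAvg_sub, gibbsAvg_const_mul, gibbsAvg_sub_const, sub_self,
      sub_zero]
  have hfc : ∀ s, (f s - c) ^ 2 ≤ 4 := fun s => by
    have := abs_le.mp (hf s); have := abs_le.mp (abs_gibbsAvg_le H hf); nlinarith
  calc (gibbsAvg (fun s => H s + W s) f - c) ^ 2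
      = (gibbsAvg H (fun s => (f s - c) * (exp (W s) - 1)) / A) ^ 2 := by
        rw [gibbsAvg_tilt, ← hnum, sub_div, mul_div_cancel_right₀ _ (by positivity : A ≠ 0)]
    _ ≤ gibbsAvg H (fun s => (f s - c) * (exp (W s) - 1)) ^ 2 := by
        rw [div_pow]; exact div_le_self (sq_nonneg _) (one_le_pow₀ hA)
    _ ≤ gibbsAvg H (fun s => ((f s - c) * (exp (W s) - 1)) ^ 2) :=
        even_two.convexOn_pow.map_gibbsAvg_le H _
    _ ≤ gibbsAvg H (fun s => 4 * (exp (W s) - 1) ^ 2) :=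
        gibbsAvg_mono H fun s => by
          rw [mul_pow]; exact mul_le_mul_of_nonneg_right (hfc s) (sq_nonneg _)
    _ = 4 * gibbsAvg H (fun s => (exp (W s) - 1) ^ 2) := gibbsAvg_const_mul H 4 _

end GibbsAverage

lemma exp_sub_one_le_mul_exp (x : ℝ) : exp x - 1 ≤ x * exp x := by
  have h := mul_le_mul_of_nonneg_right (add_one_le_exp (-x)) (exp_pos x).le
  rw [← exp_add, neg_add_cancel, exp_zero] at h
  linarith

section StdGaussian

variable {ι : Type*} [Fintype ι]

abbrev stdGaussianPi (ι : Type*) [Fintype ι] : Measure (ι → ℝ) :=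
  Measure.pi fun _ => gaussianReal 0 1

lemma integrable_exp_sum_mul (c : ι → ℝ) :
    Integrable (fun z => exp (∑ a, c a * z a)) (stdGaussianPi ι) := by
  simp_rw [exp_sum]
  exact Integrable.fintype_prod (f := fun a x => exp (c a * x))
    fun a => integrable_exp_mul_gaussianReal (c a)

lemma integral_exp_sum_mul (c : ι → ℝ) :
    ∫ z, exp (∑ a, c a * z a) ∂stdGaussianPi ι = exp ((∑ a, c a ^ 2) / 2) := by
  simp_rw [exp_sum, integral_fintype_prod_eq_prod (fun a x => exp (c a * x)), Finset.sum_div,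
    exp_sum]
  refine Finset.prod_congr rfl fun a _ => ?_
  simpa [mgf] using congrFun (mgf_fun_id_gaussianReal (μ := 0) (v := 1)) (c a)

lemma sq_exp_sub_one_eq (x : ℝ) : (exp x - 1) ^ 2 = exp (2 * x) - 2 * exp x + 1 := by
  rw [two_mul x, exp_add]; ring

lemma integrable_sq_exp_sum_mul_sub_one (c : ι → ℝ) :
    Integrable (fun z => (exp (∑ a, c a * z a) - 1) ^ 2) (stdGaussianPi ι) := by
  simp_rw [sq_exp_sub_one_eq, Finset.mul_sum, ← mul_assoc]
  exact ((integrable_exp_sum_mul _).sub ((integrable_exp_sum_mul c).const_mul 2)).add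
    (integrable_const 1)

lemma integral_sq_exp_sum_mul_sub_one_le (c : ι → ℝ) :
    ∫ z, (exp (∑ a, c a * z a) - 1) ^ 2 ∂stdGaussianPi ι
      ≤ 2 * (∑ a, c a ^ 2) * exp (2 * ∑ a, c a ^ 2) := by
  set τ := ∑ a, c a ^ 2
  have hτ : 0 ≤ τ := Finset.sum_nonneg fun a _ => sq_nonneg _
  have hval : ∫ z, (exp (∑ a, c a * z a) - 1) ^ 2 ∂stdGaussianPi ι
      = exp (2 * τ) - 2 * exp (τ / 2) + 1 := by
    have i2 := integrable_exp_sum_mul (fun a => 2 * c a)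
    have i1 := (integrable_exp_sum_mul c).const_mul 2
    simp_rw [sq_exp_sub_one_eq, Finset.mul_sum, ← mul_assoc]
    rw [integral_add (f := fun z => _ - _) (i2.sub i1) (integrable_const 1), integral_sub i2 i1,
      integral_const_mul, integral_exp_sum_mul, integral_exp_sum_mul]
    simp only [mul_pow, ← Finset.mul_sum, integral_const, probReal_univ, smul_eq_mul, mul_one, τ]
    ring_nf
  have h1 : 1 ≤ exp (τ / 2) := one_le_exp (by positivity)
  rw [hval]
  linarith [exp_sub_one_le_mul_exp (2 * τ)]

end StdGaussian

theorem integral_sq_gibbsAvg_gaussianTilt_sub_le {ι S : Type*} [Fintype ι] [Fintype S]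
    [Nonempty S] (H f : S → ℝ) (v : ι → S → ℝ) {ε T : ℝ} (hf : ∀ s, |f s| ≤ 1)
    (hv : ∀ a s, |v a s| ≤ ε) (hT : 4 * ε ^ 2 * Fintype.card ι ≤ T) :
    ∫ z, (gibbsAvg (fun s => H s + ∑ a, v a s * z a) f - gibbsAvg H f) ^ 2 ∂stdGaussianPi ι
      ≤ 8 * T * exp (2 * T) := by
  set w : ι → S → ℝ := fun a s => v a s - gibbsAvg H (v a)
  have hcenter (z : ι → ℝ) : gibbsAvg (fun s => H s + ∑ a, v a s * z a) f
      = gibbsAvg (fun s => H s + ∑ a, w a s * z a) f := by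
    rw [← gibbsAvg_add_const (fun s => H s + ∑ a, w a s * z a) (∑ a, gibbsAvg H (v a) * z a)]
    congr 1; funext s
    simp only [w, sub_mul, Finset.sum_sub_distrib]; ring
  have hmean (z : ι → ℝ) : gibbsAvg H (fun s => ∑ a, w a s * z a) = 0 := by
    simp [w, gibbsAvg_sum, gibbsAvg_mul_const, gibbsAvg_sub_const]
  have hτ (s : S) : ∑ a, w a s ^ 2 ≤ T := by
    have hw (a : ι) : w a s ^ 2 ≤ 4 * ε ^ 2 := by
      have h1 := abs_le.mp (hv a s)
      have h2 := abs_le.mp (abs_gibbsAvg_le H (hv a))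
      nlinarith
    calc ∑ a, w a s ^ 2 ≤ ∑ _a : ι, 4 * ε ^ 2 := Finset.sum_le_sum fun a _ => hw a
      _ = 4 * ε ^ 2 * Fintype.card ι := by simp [mul_comm]
      _ ≤ T := hT
  have hsq (s : S) := integrable_sq_exp_sum_mul_sub_one (fun a => w a s)
  calc _ ≤ ∫ z, 4 * gibbsAvg H (fun s => (exp (∑ a, w a s * z a) - 1) ^ 2) ∂stdGaussianPi ι := by
        refine integral_mono_of_nonneg (.of_forall fun z => sq_nonneg _)
          ((integrable_gibbsAvg H hsq).const_mul 4) (.of_forall fun z => ?_)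
        beta_reduce
        rw [hcenter]
        exact sq_gibbsAvg_tilt_sub_le H hf (hmean z)
    _ ≤ 4 * gibbsAvg H (fun _ => 2 * T * exp (2 * T)) := by
        rw [integral_const_mul, integral_gibbsAvg H hsq]
        refine mul_le_mul_of_nonneg_left (gibbsAvg_mono H fun s => ?_) (by norm_num)
        refine (integral_sq_exp_sum_mul_sub_one_le _).trans ?_
        have := hτ s
        have : 0 ≤ T := le_trans (by positivity) hT
        gcongr
    _ = 8 * T * exp (2 * T) := by rw [gibbsAvg_const]; ring

section SK

variable {N k : ℕ}

-- The couplings `g_{ij}`, `i < j < k`, among the first `k` spins: those switched off at `t = 0`.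
abbrev BlockPairs (N k : ℕ) := {q : SKPairs N // (q.1.2 : ℕ) < k}

abbrev OffBlockPairs (N k : ℕ) := {q : SKPairs N // ¬(q.1.2 : ℕ) < k}

def blockSplit (N k : ℕ) : (SKPairs N → ℝ) ≃ᵐ (BlockPairs N k → ℝ) × (OffBlockPairs N k → ℝ) :=
  MeasurableEquiv.piEquivPiSubtypeProd _ _

lemma measurePreserving_blockSplit :
    MeasurePreserving (blockSplit N k) (stdGaussianPi _)
      ((stdGaussianPi _).prod (stdGaussianPi _)) :=
  measurePreserving_piEquivPiSubtypeProd _ _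

lemma blockSplit_symm_apply (z : BlockPairs N k → ℝ)
    (y : OffBlockPairs N k → ℝ) (q : SKPairs N) :
    (blockSplit N k).symm (z, y) q = if hq : (q.1.2 : ℕ) < k then z ⟨q, hq⟩ else y ⟨q, hq⟩ :=
  rfl

lemma negHSK_blockSplit_symm (β h t : ℝ) (z : BlockPairs N k → ℝ)
    (y : OffBlockPairs N k → ℝ) (x : Fin N → ℝ) :
    negHSK N k β h t ((blockSplit N k).symm (z, y)) x
      = β / √N * (√t * ∑ a, z a * (x a.1.1.1 * x a.1.1.2)
          + ∑ a, y a * (x a.1.1.1 * x a.1.1.2)) + h * ∑ i, x i := by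
  rw [negHSK, ← Fintype.sum_subtype_add_sum_subtype (fun q : SKPairs N => (q.1.2 : ℕ) < k)]
  congr 2
  rw [Finset.mul_sum]
  congr 1 <;> refine Finset.sum_congr rfl fun a _ => ?_
  · rw [blockSplit_symm_apply, dif_pos a.2, if_pos a.2]; ring
  · rw [blockSplit_symm_apply, dif_neg a.2, if_neg a.2]; ring

lemma card_blockPairs_le :
    Fintype.card (BlockPairs N k) ≤ k ^ 2 := by
  have hinj : Function.Injective fun a : BlockPairs N k =>
      ((⟨a.1.1.1, (Fin.lt_def.mp a.1.2).trans a.2⟩ : Fin k), (⟨a.1.1.2, a.2⟩ : Fin k)) := by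
    intro a b hab
    simp only [Prod.mk.injEq, Fin.mk.injEq] at hab
    exact Subtype.ext (Subtype.ext (Prod.ext (Fin.ext hab.1) (Fin.ext hab.2)))
  simpa [sq] using Fintype.card_le_of_injective _ hinj

lemma gibbsSK_eq_gibbsAvg (β h t : ℝ) (g : SKPairs N → ℝ) (f : (Fin N → ℝ) → ℝ) :
    gibbsSK N k β h t g f
      = gibbsAvg (fun b => negHSK N k β h t g (spin b)) (fun b => f (spin b)) :=
  (gibbsAvg_eq_div _ _).symm

lemma abs_gibbsSK_le (β h t : ℝ) (g : SKPairs N → ℝ) {f : (Fin N → ℝ) → ℝ}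
    (hf : ∀ x, |f x| ≤ 1) : |gibbsSK N k β h t g f| ≤ 1 := by
  rw [gibbsSK_eq_gibbsAvg]
  exact abs_gibbsAvg_le _ fun b => hf (spin b)

lemma measurable_gibbsSK (β h t : ℝ) (f : (Fin N → ℝ) → ℝ) :
    Measurable fun g : SKPairs N → ℝ => gibbsSK N k β h t g f := by
  unfold gibbsSK negHSK
  fun_prop

lemma abs_spin_mul_spin (b : Fin N → Bool) (i j : Fin N) : |spin b i * spin b j| = 1 := by
  simp only [spin, abs_mul]
  split_ifs <;> norm_num

lemma integral_sq_gibbsSK_blockSplit_sub_le (β h : ℝ) {f : (Fin N → ℝ) → ℝ}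
    (hf : ∀ x, |f x| ≤ 1) (y : OffBlockPairs N k → ℝ) :
    ∫ z, (gibbsSK N k β h 1 ((blockSplit N k).symm (z, y)) f
        - gibbsSK N k β h 0 ((blockSplit N k).symm (z, y)) f) ^ 2 ∂stdGaussianPi _
      ≤ 8 * (4 * β ^ 2 * k ^ 2 / N) * exp (2 * (4 * β ^ 2 * k ^ 2 / N)) := by
  set Hy : (Fin N → Bool) → ℝ := fun b =>
    β / √N * ∑ a, y a * (spin b a.1.1.1 * spin b a.1.1.2) + h * ∑ i, spin b i
  set v : BlockPairs N k → (Fin N → Bool) → ℝ := fun a b =>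
    β / √N * (spin b a.1.1.1 * spin b a.1.1.2)
  have hv (a) (b) : |v a b| ≤ |β| / √N := by
    rw [abs_mul, abs_spin_mul_spin, mul_one, abs_div, abs_of_nonneg (sqrt_nonneg _)]
  have hgibbs (t : ℝ) (z) : gibbsSK N k β h t ((blockSplit N k).symm (z, y)) f
      = gibbsAvg (fun b => Hy b + √t * ∑ a, v a b * z a) (fun b => f (spin b)) := by
    rw [gibbsSK_eq_gibbsAvg]
    congr 1; funext b
    have hsum : ∑ a, v a b * z a = β / √N * ∑ a, z a * (spin b a.1.1.1 * spin b a.1.1.2) := by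
      rw [Finset.mul_sum]
      exact Finset.sum_congr rfl fun a _ => by ring
    rw [negHSK_blockSplit_symm, hsum]
    ring
  simp only [hgibbs, sqrt_one, sqrt_zero, one_mul, zero_mul, add_zero]
  refine integral_sq_gibbsAvg_gaussianTilt_sub_le Hy _ v (fun b => hf _) hv ?_
  calc 4 * (|β| / √N) ^ 2 * Fintype.card (BlockPairs N k)
      = 4 * β ^ 2 * Fintype.card (BlockPairs N k) / N := by
        rw [div_pow, sq_abs, sq_sqrt (Nat.cast_nonneg N)]; ring
    _ ≤ 4 * β ^ 2 * k ^ 2 / N := by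
        gcongr; exact_mod_cast card_blockPairs_le

lemma abs_gibbsSK_sub_le (β h t t' : ℝ) (g : SKPairs N → ℝ) {f : (Fin N → ℝ) → ℝ}
    (hf : ∀ x, |f x| ≤ 1) : |gibbsSK N k β h t g f - gibbsSK N k β h t' g f| ≤ 2 := by
  have h1 := abs_gibbsSK_le β h t g (k := k) hf
  have h2 := abs_gibbsSK_le β h t' g (k := k) hf
  linarith [abs_sub (gibbsSK N k β h t g f) (gibbsSK N k β h t' g f)]

lemma sq_gibbsSK_sub_le (β h t t' : ℝ) (g : SKPairs N → ℝ) {f : (Fin N → ℝ) → ℝ}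
    (hf : ∀ x, |f x| ≤ 1) : (gibbsSK N k β h t g f - gibbsSK N k β h t' g f) ^ 2 ≤ 4 := by
  rw [← sq_abs, show (4 : ℝ) = 2 ^ 2 by norm_num]
  exact pow_le_pow_left₀ (abs_nonneg _) (abs_gibbsSK_sub_le β h t t' g hf) 2

lemma integral_sq_gibbsSK_sub_le_of_sq_le (β h : ℝ) {f : (Fin N → ℝ) → ℝ}
    (hf : ∀ x, |f x| ≤ 1) (hkN : (k : ℝ) ^ 2 ≤ N) :
    ∫ G, (gibbsSK N k β h 1 G f - gibbsSK N k β h 0 G f) ^ 2 ∂stdGaussianPi (SKPairs N)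
      ≤ 32 * β ^ 2 * exp (8 * β ^ 2) * (k ^ 2 / N) := by
  set F := fun G => (gibbsSK N k β h 1 G f - gibbsSK N k β h 0 G f) ^ 2
  set T : ℝ := 4 * β ^ 2 * k ^ 2 / N
  have hF : Measurable F :=
    ((measurable_gibbsSK β h 1 f).sub (measurable_gibbsSK β h 0 f)).pow_const 2
  have hFint : Integrable (fun yz => F ((blockSplit N k).symm yz))
      ((stdGaussianPi _).prod (stdGaussianPi _)) :=
    .of_bound (hF.comp (blockSplit N k).symm.measurable).aestronglyMeasurable 4
      (.of_forall fun yz => by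
        rw [Real.norm_of_nonneg (sq_nonneg _)]; exact sq_gibbsSK_sub_le β h 1 0 _ hf)
  have hT0 : 0 ≤ T := by positivity
  have hT : T ≤ 4 * β ^ 2 := by
    rw [show T = 4 * β ^ 2 * (k ^ 2 / N) from mul_div_assoc _ _ _]
    exact mul_le_of_le_one_right (by positivity) (div_le_one_of_le₀ hkN (Nat.cast_nonneg N))
  calc ∫ G, F G ∂stdGaussianPi (SKPairs N)
      = ∫ y, ∫ z, F ((blockSplit N k).symm (z, y)) ∂stdGaussianPi _ ∂stdGaussianPi _ := by
        rw [← integral_prod_symm _ hFint,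
          ← measurePreserving_blockSplit.integral_comp' (fun yz => F ((blockSplit N k).symm yz))]
        simp only [MeasurableEquiv.symm_apply_apply]
    _ ≤ ∫ _y, 8 * T * exp (2 * T) ∂stdGaussianPi (OffBlockPairs N k) :=
        integral_mono_of_nonneg (.of_forall fun y => integral_nonneg fun z => sq_nonneg _)
          (integrable_const _)
          (.of_forall fun y => integral_sq_gibbsSK_blockSplit_sub_le β h hf y)
    _ ≤ 8 * T * exp (8 * β ^ 2) := by
        rw [integral_const, probReal_univ, one_smul]
        exact mul_le_mul_of_nonneg_left (exp_le_exp.mpr (by linarith)) (by positivity)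
    _ = 32 * β ^ 2 * exp (8 * β ^ 2) * (k ^ 2 / N) := by ring

lemma integral_sq_gibbsSK_sub_le (β h : ℝ) {f : (Fin N → ℝ) → ℝ}
    (hf : ∀ x, |f x| ≤ 1) (hN : 0 < N) :
    ∫ G, (gibbsSK N k β h 1 G f - gibbsSK N k β h 0 G f) ^ 2 ∂stdGaussianPi (SKPairs N)
      ≤ (32 * β ^ 2 * exp (8 * β ^ 2) + 4) * (k ^ 2 / N) := by
  by_cases hkN : (k : ℝ) ^ 2 ≤ N
  · refine (integral_sq_gibbsSK_sub_le_of_sq_le β h hf hkN).trans ?_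
    gcongr
    linarith
  · have hone : 1 ≤ (k : ℝ) ^ 2 / N := (one_le_div (by positivity)).mpr (not_le.mp hkN).le
    calc _ ≤ ∫ _G, (4 : ℝ) ∂stdGaussianPi (SKPairs N) :=
          integral_mono_of_nonneg (.of_forall fun _ => sq_nonneg _) (integrable_const _)
            (.of_forall fun G => sq_gibbsSK_sub_le β h 1 0 G hf)
      _ = 4 * 1 := by simp
      _ ≤ (32 * β ^ 2 * exp (8 * β ^ 2) + 4) * (k ^ 2 / N) := by
          have : 0 ≤ 32 * β ^ 2 * exp (8 * β ^ 2) := by positivity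
          gcongr
          linarith

end SK

lemma abs_pow_le_pow_mul_sq {x M : ℝ} {n : ℕ} (hx : |x| ≤ M) (hn : 2 ≤ n) :
    |x| ^ n ≤ M ^ (n - 2) * x ^ 2 := by
  rw [← sq_abs x, ← pow_sub_mul_pow _ hn]
  gcongr

theorem sk_quenched_decomposition_general (p : ℕ) (hp : 1 ≤ p) (β : ℝ) :
    ∃ K : ℝ, 0 < K ∧
      ∀ (N k : ℕ), 1 ≤ k → k < N →
      ∀ h : ℝ,
      ∀ (Ω : Type) [MeasurableSpace Ω] (P : Measure Ω) [IsProbabilityMeasure P]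
        (g : Ω → SKPairs N → ℝ),
        Measurable g →
        Measure.map g P = Measure.pi (fun _ : SKPairs N => gaussianReal 0 1) →
      ∀ f : (Fin N → ℝ) → ℝ, (∀ x, |f x| ≤ 1) →
        (∫ ω, |gibbsSK N k β h 1 (g ω) f - gibbsSK N k β h 0 (g ω) f| ^ (2 * p) ∂P)
          ≤ K * (k : ℝ) ^ 2 / N := by
  refine ⟨2 ^ (2 * p - 2) * (32 * β ^ 2 * exp (8 * β ^ 2) + 4), by positivity, ?_⟩
  intro N k _ hkN h Ω _ P _ g hg hmap f hf
  set D := fun G => gibbsSK N k β h 1 G f - gibbsSK N k β h 0 G f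
  have hD : Measurable D := (measurable_gibbsSK β h 1 f).sub (measurable_gibbsSK β h 0 f)
  have hDsq : Integrable (fun ω => D (g ω) ^ 2) P :=
    .of_bound ((hD.comp hg).pow_const 2).aestronglyMeasurable 4 (.of_forall fun ω => by
      rw [Real.norm_of_nonneg (sq_nonneg _)]; exact sq_gibbsSK_sub_le β h 1 0 _ hf)
  calc ∫ ω, |D (g ω)| ^ (2 * p) ∂P
      ≤ ∫ ω, 2 ^ (2 * p - 2) * D (g ω) ^ 2 ∂P :=
        integral_mono_of_nonneg (.of_forall fun _ => by positivity) (hDsq.const_mul _)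
          (.of_forall fun ω => abs_pow_le_pow_mul_sq (abs_gibbsSK_sub_le β h 1 0 _ hf) (by omega))
    _ = 2 ^ (2 * p - 2) * ∫ G, D G ^ 2 ∂stdGaussianPi (SKPairs N) := by
        rw [integral_const_mul, show stdGaussianPi (SKPairs N) = P.map g from hmap.symm,
          integral_map hg.aemeasurable (hD.pow_const 2).aestronglyMeasurable]
    _ ≤ 2 ^ (2 * p - 2) * ((32 * β ^ 2 * exp (8 * β ^ 2) + 4) * (k ^ 2 / N)) := by
        gcongr
        exact integral_sq_gibbsSK_sub_le β h hf (by omega)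
    _ = _ := by ring

/-- In the classical SK model, for every function `f` on `Σ_N` with `|f| ≤ 1` and
every integer `p ≥ 1`, `E[|⟨f⟩ − ⟨f⟩_0|^{2p}] ≤ K(p,β) k²/N`, where `⟨·⟩_0` is the Gibbs
measure of the interpolating Hamiltonian at `t = 0` and `K(p,β)` depends only on `p`, `β`. -/
theorem sk_quenched_decomposition (p : ℕ) (hp : 1 ≤ p) (β : ℝ) (hβ : 0 < β) :
    ∃ K : ℝ, 0 < K ∧
      ∀ (N k : ℕ), 1 ≤ k → k < N →
      ∀ h : ℝ,
      ∀ (Ω : Type) [MeasurableSpace Ω] (P : Measure Ω) [IsProbabilityMeasure P]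
        (g : Ω → SKPairs N → ℝ),
        Measurable g →
        Measure.map g P = Measure.pi (fun _ : SKPairs N => gaussianReal 0 1) →
      ∀ f : (Fin N → ℝ) → ℝ, (∀ x, |f x| ≤ 1) →
        (∫ ω, |gibbsSK N k β h 1 (g ω) f - gibbsSK N k β h 0 (g ω) f| ^ (2 * p) ∂P)
          ≤ K * (k : ℝ) ^ 2 / N :=
  sk_quenched_decomposition_general p hp β
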